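/- Let {S_i}_{i∈I} be a finite family of communicating systems over pairwise disjoint participant sets, let H = {h_i}_{i∈I} be a set of interfaces for it such that every interface h_i has no mixed states, let CM be a connection model for H, and let K be a connection policy for H complying with CM. If every S_i (i ∈ I) is reception-error free and K is reception-error free, then the multicomposition MC({S_i}_{i∈I}, K) is reception-error free. -/

import Mathlib

namespace CFSM

/-- Direction of a communication action: output (`!`) or input (`?`). -/
inductive Dir : Type where
  | out : Dir
  | inp : Dir
deriving DecidableEq

instance : Fintype Dir :=
  ⟨{Dir.out, Dir.inp}, fun x => by cases x <;> simp⟩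

/-- An action `pq!a` (output) or `pq?a` (input) over participants `P` and messages `A`:
`snd` is the sender `p`, `rcv` the receiver `q`, `msg` the message `a`. -/
structure Act (P : Type) (A : Type) : Type where
  snd : P
  rcv : P
  dir : Dir
  msg : A

instance {P A : Type} [Finite P] [Finite A] : Finite (Act P A) :=
  Finite.of_injective (fun l => (l.snd, l.rcv, l.dir, l.msg))
    (fun a b h => by
      cases a; cases b
      simp only [Prod.mk.injEq] at h
      obtain ⟨h1, h2, h3, h4⟩ := h
      subst h1; subst h2; subst h3; subst h4; rfl)

/-- The subject of an action: the sender of an output, the receiver of an input. -/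
def Act.subject {P A : Type} (l : Act P A) : P :=
  match l.dir with
  | .out => l.snd
  | .inp => l.rcv

/-- A communicating system over participants `P` and messages `A`:
one machine (state type, initial state and transition relation) per participant. -/
structure CS (P : Type) (A : Type) : Type 1 where
  St : P → Type
  init : ∀ p, St p
  delta : ∀ p, Set (St p × Act P A × St p)

/-- All actions of the machine of participant `p` have subject `p`
(the name of the machine) and distinct endpoints. -/
def CS.WellFormed {P A : Type} (S : CS P A) : Prop :=
  ∀ p t, t ∈ S.delta p → ((t.2.1 : Act P A).subject = p ∧ t.2.1.snd ≠ t.2.1.rcv)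

/-- A configuration: a local state for each machine and a FIFO buffer
for each ordered pair of participants. -/
structure Config {P A : Type} (S : CS P A) : Type where
  st : ∀ p, S.St p
  ch : P → P → List A

/-- The initial configuration: all machines in their initial state, all channels empty. -/
def CS.initConfig {P A : Type} (S : CS P A) : Config S :=
  ⟨S.init, fun _ _ => []⟩

/-- The labelled transition relation between configurations. -/
def StepL {P A : Type} (S : CS P A) (c : Config S) (l : Act P A) (c' : Config S) : Prop :=
  match l.dir with
  | .out =>
      (c.st l.snd, l, c'.st l.snd) ∈ S.delta l.snd ∧
      (∀ p, p ≠ l.snd → c'.st p = c.st p) ∧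
      c'.ch l.snd l.rcv = c.ch l.snd l.rcv ++ [l.msg] ∧
      (∀ p q, (p, q) ≠ (l.snd, l.rcv) → c'.ch p q = c.ch p q)
  | .inp =>
      (c.st l.rcv, l, c'.st l.rcv) ∈ S.delta l.rcv ∧
      (∀ p, p ≠ l.rcv → c'.st p = c.st p) ∧
      c.ch l.snd l.rcv = l.msg :: c'.ch l.snd l.rcv ∧
      (∀ p q, (p, q) ≠ (l.snd, l.rcv) → c'.ch p q = c.ch p q)

/-- Unlabelled transition relation. -/
def Step {P A : Type} (S : CS P A) (c c' : Config S) : Prop :=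
  ∃ l, StepL S c l c'

/-- Reachability between configurations. -/
def Reach {P A : Type} (S : CS P A) : Config S → Config S → Prop :=
  Relation.ReflTransGen (Step S)

/-- The set of configurations reachable from the initial configuration. -/
def RC {P A : Type} (S : CS P A) : Set (Config S) :=
  {c | Reach S S.initConfig c}

/-- A local state is final if it has no outgoing transition. -/
def FinalSt {Q P A : Type} (δ : Set (Q × Act P A × Q)) (q : Q) : Prop :=
  ∀ l q', (q, l, q') ∉ δ

/-- A local state is receiving if it is not final and all its outgoing
transitions are labelled with input actions. -/
def ReceivingSt {Q P A : Type} (δ : Set (Q × Act P A × Q)) (q : Q) : Prop :=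
  (∃ l q', (q, l, q') ∈ δ) ∧ ∀ l q', (q, l, q') ∈ δ → (l : Act P A).dir = Dir.inp

/-- A local state is mixed if it has at least one outgoing output-labelled
transition and at least one outgoing input-labelled transition. -/
def MixedSt {Q P A : Type} (δ : Set (Q × Act P A × Q)) (q : Q) : Prop :=
  (∃ l q', (q, l, q') ∈ δ ∧ (l : Act P A).dir = Dir.out) ∧
  (∃ l q', (q, l, q') ∈ δ ∧ (l : Act P A).dir = Dir.inp)

/-- A machine has no mixed states. -/
def NoMixed {Q P A : Type} (δ : Set (Q × Act P A × Q)) : Prop :=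
  ∀ q, ¬ MixedSt δ q

/-- Deadlock configuration: all channels empty but all machines in receiving states. -/
def DeadlockConfig {P A : Type} (S : CS P A) (c : Config S) : Prop :=
  (∀ p q, c.ch p q = []) ∧ ∀ p, ReceivingSt (S.delta p) (c.st p)

def DeadlockFree {P A : Type} (S : CS P A) : Prop :=
  ∀ c ∈ RC S, ¬ DeadlockConfig S c

/-- Orphan-message configuration: all machines final but some channel nonempty. -/
def OrphanConfig {P A : Type} (S : CS P A) (c : Config S) : Prop :=
  (∀ p, FinalSt (S.delta p) (c.st p)) ∧ ∃ p q, c.ch p q ≠ []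

def OrphanFree {P A : Type} (S : CS P A) : Prop :=
  ∀ c ∈ RC S, ¬ OrphanConfig S c

/-- Unspecified reception configuration: some machine `r` is in a receiving state and,
for every input transition of `r`, the corresponding channel is nonempty with a
first element different from the expected message. -/
def URConfig {P A : Type} (S : CS P A) (c : Config S) : Prop :=
  ∃ r, ReceivingSt (S.delta r) (c.st r) ∧
    ∀ s a q', (c.st r, Act.mk s r Dir.inp a, q') ∈ S.delta r →
      (c.ch s r ≠ [] ∧ ¬ ∃ w, c.ch s r = a :: w)

def ReceptionErrorFree {P A : Type} (S : CS P A) : Prop :=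
  ∀ c ∈ RC S, ¬ URConfig S c

/-- Progress: every reachable configuration has an outgoing transition or all
machines are in final states. -/
def ProgressProp {P A : Type} (S : CS P A) : Prop :=
  ∀ c ∈ RC S, (∃ c', Step S c c') ∨ ∀ p, FinalSt (S.delta p) (c.st p)

/-- `p`-lock configuration: `p` is in a receiving state and never occurs as the
subject of an action in any transition sequence from `c`. -/
def PLockConfig {P A : Type} (S : CS P A) (c : Config S) (p : P) : Prop :=
  ReceivingSt (S.delta p) (c.st p) ∧
  ∀ c1 l c2, Reach S c c1 → StepL S c1 l c2 → l.subject ≠ p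

def LockFree {P A : Type} (S : CS P A) : Prop :=
  ∀ c ∈ RC S, ∀ p, ¬ PLockConfig S c p

section Composition

variable {I : Type} {P : I → Type} {A : Type}

/-- Messages occurring in input actions of the machine of `p`. -/
def inMsgs {Pp A : Type} (S : CS Pp A) (p : Pp) : Set A :=
  {a | ∃ q s q', (q, Act.mk s p Dir.inp a, q') ∈ S.delta p}

/-- Messages occurring in output actions of the machine of `p`. -/
def outMsgs {Pp A : Type} (S : CS Pp A) (p : Pp) : Set A :=
  {a | ∃ q r q', (q, Act.mk p r Dir.out a, q') ∈ S.delta p}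

/-- `CM` is a connection model for the interfaces `hh i` of the family `S`
(the interface `h_i` is represented by its index `i`). -/
def IsConnModel (S : ∀ i, CS (P i) A) (hh : ∀ i, P i) (CM : Set (I × A × I)) : Prop :=
  ∀ i a,
    (a ∈ inMsgs (S i) (hh i) →
      ∃ j, j ≠ i ∧ a ∈ outMsgs (S j) (hh j) ∧ (i, a, j) ∈ CM) ∧
    (a ∈ outMsgs (S i) (hh i) →
      ∃ j, j ≠ i ∧ a ∈ inMsgs (S j) (hh j) ∧ (j, a, i) ∈ CM)

/-- `CM` is a strong connection model: additionally the connecting partner is unique. -/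
def IsStrongConnModel (S : ∀ i, CS (P i) A) (hh : ∀ i, P i) (CM : Set (I × A × I)) : Prop :=
  IsConnModel S hh CM ∧
  ∀ i a,
    (a ∈ inMsgs (S i) (hh i) → ∃! j, (i, a, j) ∈ CM) ∧
    (a ∈ outMsgs (S i) (hh i) → ∃! j, (j, a, i) ∈ CM)

/-- Conditions (*) and (**) for a candidate transition relation `d` of the local
connection policy of interface `hh i` (the name `k_i` is represented by `i`). -/
def PolicySat (S : ∀ i, CS (P i) A) (hh : ∀ i, P i) (CM : Set (I × A × I)) (i : I)
    (d : Set ((S i).St (hh i) × Act I A × (S i).St (hh i))) : Prop :=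
  (∀ q r a q', (q, Act.mk r (hh i) Dir.inp a, q') ∈ (S i).delta (hh i) →
      ∃ j, j ≠ i ∧ (i, a, j) ∈ CM ∧ (q, Act.mk i j Dir.out a, q') ∈ d) ∧
  (∀ q r a q', (q, Act.mk (hh i) r Dir.out a, q') ∈ (S i).delta (hh i) →
      ∃ j, j ≠ i ∧ (j, a, i) ∈ CM ∧ (q, Act.mk j i Dir.inp a, q') ∈ d)

/-- `d` belongs to the local connection policy set `IS(M_{h_i}, CM)`:
it is a minimal relation satisfying (*) and (**).  (The states `q̇` of the
policy machine are identified with the states `q` of `M_{h_i}`.) -/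
def InIS (S : ∀ i, CS (P i) A) (hh : ∀ i, P i) (CM : Set (I × A × I)) (i : I)
    (d : Set ((S i).St (hh i) × Act I A × (S i).St (hh i))) : Prop :=
  PolicySat S hh CM i d ∧ ∀ d', d' ⊆ d → PolicySat S hh CM i d' → d' = d

/-- The communicating system (over the participant type `I` of names `k_i`)
determined by the family of transition relations `Kd` of a connection policy. -/
def policyCS (S : ∀ i, CS (P i) A) (hh : ∀ i, P i)
    (Kd : ∀ i, Set ((S i).St (hh i) × Act I A × (S i).St (hh i))) : CS I A where
  St := fun i => (S i).St (hh i)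
  init := fun i => (S i).init (hh i)
  delta := Kd

/-- `Kd` is a connection policy for the interfaces `hh` complying with `CM`. -/
def IsConnPolicy (S : ∀ i, CS (P i) A) (hh : ∀ i, P i) (CM : Set (I × A × I))
    (Kd : ∀ i, Set ((S i).St (hh i) × Act I A × (S i).St (hh i))) : Prop :=
  ∀ i, InIS S hh CM i (Kd i)

/-- States of the gateway for interface `hh i`: the original states plus one
fresh state per transition of `M_{h_i}`. -/
abbrev GWState (S : ∀ i, CS (P i) A) (hh : ∀ i, P i) (i : I) : Type :=
  (S i).St (hh i) ⊕ ((S i).St (hh i) × Act (P i) A × (S i).St (hh i))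

/-- Lifting of a local action of system `i` to the composed participant type. -/
def liftAct (i : I) (l : Act (P i) A) : Act ((j : I) × P j) A :=
  Act.mk ⟨i, l.snd⟩ ⟨i, l.rcv⟩ l.dir l.msg

/-- Transition relation of the gateway `M_{h_i} ⟲ M_{k_i}`. -/
def GWdelta (S : ∀ i, CS (P i) A) (hh : ∀ i, P i)
    (Kd : ∀ i, Set ((S i).St (hh i) × Act I A × (S i).St (hh i))) (i : I) :
    Set (GWState S hh i × Act ((j : I) × P j) A × GWState S hh i) :=
  {x | ∃ q a q',
    (∃ s r, (q, Act.mk (hh i) s Dir.out a, q') ∈ (S i).delta (hh i) ∧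
        (q, Act.mk r i Dir.inp a, q') ∈ Kd i ∧
        (x = (Sum.inl q, Act.mk ⟨r, hh r⟩ ⟨i, hh i⟩ Dir.inp a,
              Sum.inr (q, Act.mk (hh i) s Dir.out a, q')) ∨
         x = (Sum.inr (q, Act.mk (hh i) s Dir.out a, q'),
              Act.mk ⟨i, hh i⟩ ⟨i, s⟩ Dir.out a, Sum.inl q'))) ∨
    (∃ s r, (q, Act.mk s (hh i) Dir.inp a, q') ∈ (S i).delta (hh i) ∧
        (q, Act.mk i r Dir.out a, q') ∈ Kd i ∧
        (x = (Sum.inl q, Act.mk ⟨i, s⟩ ⟨i, hh i⟩ Dir.inp a,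
              Sum.inr (q, Act.mk s (hh i) Dir.inp a, q')) ∨
         x = (Sum.inr (q, Act.mk s (hh i) Dir.inp a, q'),
              Act.mk ⟨i, hh i⟩ ⟨r, hh r⟩ Dir.out a, Sum.inl q')))}

open Classical in
/-- State type of the machine of participant `⟨i, p⟩` in the multicomposition:
the gateway state type if `p` is the interface of system `i`, the original
state type otherwise. -/
noncomputable def MCSt (S : ∀ i, CS (P i) A) (hh : ∀ i, P i) (x : (i : I) × P i) : Type :=
  if x.2 = hh x.1 then GWState S hh x.1 else (S x.1).St x.2

/-- The multicomposition `MC({S_i}, K)`: all machines of the single systems,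
with the machine of each interface `hh i` replaced by its gateway. -/
noncomputable def MC (S : ∀ i, CS (P i) A) (hh : ∀ i, P i)
    (Kd : ∀ i, Set ((S i).St (hh i) × Act I A × (S i).St (hh i))) :
    CS ((i : I) × P i) A where
  St := MCSt S hh
  init := fun x => by
    by_cases hp : x.2 = hh x.1
    · have h : MCSt S hh x = GWState S hh x.1 := by simp [MCSt, hp]
      rw [h]; exact Sum.inl ((S x.1).init (hh x.1))
    · have h : MCSt S hh x = (S x.1).St x.2 := by simp [MCSt, hp]
      rw [h]; exact (S x.1).init x.2
  delta := fun x => by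
    by_cases hp : x.2 = hh x.1
    · have h : MCSt S hh x = GWState S hh x.1 := by simp [MCSt, hp]
      rw [h]; exact GWdelta S hh Kd x.1
    · have h : MCSt S hh x = (S x.1).St x.2 := by simp [MCSt, hp]
      rw [h]
      exact {t | ∃ q l q', (q, l, q') ∈ (S x.1).delta x.2 ∧ t = (q, liftAct x.1 l, q')}

/-- The state of the gateway of interface `hh i` in a configuration of the
multicomposition, as an element of `GWState`. -/
noncomputable def toGW (S : ∀ i, CS (P i) A) (hh : ∀ i, P i) (i : I)
    (x : MCSt S hh ⟨i, hh i⟩) : GWState S hh i :=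
  cast (by simp [MCSt]) x

/-- The state of a non-interface participant in a configuration of the
multicomposition, as an element of its original state type. -/
noncomputable def toLoc (S : ∀ i, CS (P i) A) (hh : ∀ i, P i) {i : I} {p : P i}
    (hp : p ≠ hh i) (x : MCSt S hh ⟨i, p⟩) : (S i).St p :=
  cast (by simp [MCSt, hp]) x

/-- Projection of a configuration of the multicomposition to system `S i`,
assuming the gateway state of `hh i` is not a fresh intermediate state
(i.e. it is of the form `Sum.inl q`). -/
noncomputable def projSys (S : ∀ i, CS (P i) A) (hh : ∀ i, P i)
    (Kd : ∀ i, Set ((S i).St (hh i) × Act I A × (S i).St (hh i)))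
    (i : I) (s : Config (MC S hh Kd))
    (hq : ∃ q, toGW S hh i (s.st ⟨i, hh i⟩) = Sum.inl q) : Config (S i) where
  st := fun p => by
    by_cases hp : p = hh i
    · rw [hp]; exact hq.choose
    · exact toLoc S hh hp (s.st ⟨i, p⟩)
  ch := fun p q => s.ch ⟨i, p⟩ ⟨i, q⟩

/-- Projection of a configuration of the multicomposition to the connection
policy `K`, assuming no gateway is in a fresh intermediate state. -/
noncomputable def projPolicy (S : ∀ i, CS (P i) A) (hh : ∀ i, P i)
    (Kd : ∀ i, Set ((S i).St (hh i) × Act I A × (S i).St (hh i)))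
    (s : Config (MC S hh Kd))
    (hq : ∀ i, ∃ q, toGW S hh i (s.st ⟨i, hh i⟩) = Sum.inl q) :
    Config (policyCS S hh Kd) where
  st := fun i => (hq i).choose
  ch := fun i j => s.ch ⟨i, hh i⟩ ⟨j, hh j⟩

end Composition

end CFSM
/-!
Reachable configurations of the multicomposition project to reachable configurations of every
`S i` and of the policy `K`: a gateway in an original state `q` is in `q` for both, and in a
fresh state `q^t` it has performed one half of the forwarding of `t`, so one side sees it in
the source and the other in the target of `t`. Under these projections each step of the
multicomposition is a step of one `S i`, a step of `K`, or invisible.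

A non-interface machine with an unspecified reception projects to one in its own system, and a
gateway in a fresh state can only output. A gateway stuck in an original state `q` waits for
exactly the inputs of `M_{h_i}` at `q` (if `q` is receiving, giving an unspecified reception of
`S i`) or for exactly the inputs of the policy at `q` (if `q` is sending, since by minimality the
policy only has the inputs that `(**)` requires there); `q` is not mixed, so there is no third
case.
-/

namespace CFSM

attribute [ext] Config

section Generic

variable {P Q A : Type}

def Act.map (f : Q → P) (l : Act Q A) : Act P A :=
  ⟨f l.snd, f l.rcv, l.dir, l.msg⟩

lemma Act.subject_map (f : Q → P) (l : Act Q A) : (l.map f).subject = f l.subject := by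
  obtain ⟨s, r, d, a⟩ := l
  cases d <;> rfl

lemma Act.subject_eq_snd_or_rcv (l : Act P A) : l.subject = l.snd ∨ l.subject = l.rcv := by
  obtain ⟨s, r, d, a⟩ := l
  cases d
  exacts [Or.inl rfl, Or.inr rfl]

/-- `URConfig S c` unfolds to `∃ r, URAt S c r`. -/
def URAt (S : CS P A) (c : Config S) (r : P) : Prop :=
  ReceivingSt (S.delta r) (c.st r) ∧
    ∀ s a q', (c.st r, Act.mk s r Dir.inp a, q') ∈ S.delta r →
      (c.ch s r ≠ [] ∧ ¬ ∃ w, c.ch s r = a :: w)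

variable {T : CS P A} {S : CS Q A} {c c' : Config T} {l : Act P A}

namespace StepL

lemma mem_delta (h : StepL T c l c') :
    (c.st l.subject, l, c'.st l.subject) ∈ T.delta l.subject := by
  obtain ⟨s, r, d, a⟩ := l
  cases d <;> exact h.1

lemma st_eq (h : StepL T c l c') : ∀ p ≠ l.subject, c'.st p = c.st p := by
  obtain ⟨s, r, d, a⟩ := l
  cases d <;> exact h.2.1

lemma ch_eq (h : StepL T c l c') :
    ∀ p q, (p, q) ≠ (l.snd, l.rcv) → c'.ch p q = c.ch p q := by
  obtain ⟨s, r, d, a⟩ := l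
  cases d <;> exact h.2.2.2

end StepL

def Config.comap (emb : Q → P) (g : ∀ u, T.St (emb u) → S.St u) (c : Config T) : Config S where
  st u := g u (c.st (emb u))
  ch u v := c.ch (emb u) (emb v)

variable {emb : Q → P} {g : ∀ u, T.St (emb u) → S.St u}

lemma StepL.comap (hemb : Function.Injective emb) {l₀ : Act Q A} (h : StepL T c (l₀.map emb) c')
    (hmem : ((c.comap emb g).st l₀.subject, l₀, (c'.comap emb g).st l₀.subject) ∈
      S.delta l₀.subject) :
    StepL S (c.comap emb g) l₀ (c'.comap emb g) := by
  have hst : ∀ u ≠ l₀.subject, (c'.comap emb g).st u = (c.comap emb g).st u := fun u hu =>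
    congrArg (g u) (h.st_eq _ (by rw [Act.subject_map]; exact hemb.ne hu))
  have hch : ∀ u v, (u, v) ≠ (l₀.snd, l₀.rcv) → (c'.comap emb g).ch u v = (c.comap emb g).ch u v :=
    fun u v huv => h.ch_eq _ _ fun e => huv (by
      simp only [Act.map, Prod.mk.injEq, hemb.eq_iff] at e ⊢; exact e)
  obtain ⟨s, r, d, a⟩ := l₀
  cases d
  exacts [⟨hmem, hst, h.2.2.1, hch⟩, ⟨hmem, hst, h.2.2.1, hch⟩]

lemma StepL.comap_eq (h : StepL T c l c')
    (hst : ∀ u, emb u = l.subject → (c'.comap emb g).st u = (c.comap emb g).st u)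
    (hch : ∀ u v, (emb u, emb v) ≠ (l.snd, l.rcv)) :
    c'.comap emb g = c.comap emb g := by
  refine Config.ext (funext fun u => ?_) (funext fun u => funext fun v => h.ch_eq _ _ (hch u v))
  by_cases hu : emb u = l.subject
  · exact hst u hu
  · exact congrArg (g u) (h.st_eq _ hu)

lemma StepL.comap_eq_of_subject_eq (hemb : Function.Injective emb) {r : Q} (h : StepL T c l c')
    (hsub : l.subject = emb r) (hst : (c'.comap emb g).st r = (c.comap emb g).st r)
    (hch : ∀ u v, (emb u, emb v) ≠ (l.snd, l.rcv)) :
    c'.comap emb g = c.comap emb g :=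
  h.comap_eq (fun u hu => by obtain rfl := hemb (hu.trans hsub); exact hst) hch

lemma StepL.comap_eq_of_forall_ne (h : StepL T c l c') (hl : ∀ u, emb u ≠ l.subject) :
    c'.comap emb g = c.comap emb g :=
  h.comap_eq (fun u hu => absurd hu (hl u)) fun u v huv => by
    simp only [Prod.mk.injEq] at huv
    rcases l.subject_eq_snd_or_rcv with hs | hs
    exacts [hl u (huv.1.trans hs.symm), hl v (huv.2.trans hs.symm)]

lemma URAt.comap {r : Q} (hur : URAt T c (emb r))
    (hrecv : ReceivingSt (S.delta r) ((c.comap emb g).st r))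
    (hlift : ∀ s a q', ((c.comap emb g).st r, Act.mk s r Dir.inp a, q') ∈ S.delta r →
      ∃ y, (c.st (emb r), Act.mk (emb s) (emb r) Dir.inp a, y) ∈ T.delta (emb r)) :
    URAt S (c.comap emb g) r :=
  ⟨hrecv, fun s a q' h => let ⟨y, hy⟩ := hlift s a q' h; hur.2 _ a y hy⟩

lemma mem_cast_set {α β γ : Type} (e : α = β) (h : Set (α × γ × α) = Set (β × γ × β))
    (s : Set (α × γ × α)) (x y : β) (l : γ) :
    (x, l, y) ∈ cast h s ↔ (cast e.symm x, l, cast e.symm y) ∈ s := by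
  subst e
  exact Iff.rfl

lemma mem_RC_map (f : Config T → Config S) (h₀ : f T.initConfig = S.initConfig)
    (hstep : ∀ c l c', StepL T c l c' → Reach S (f c) (f c')) {c : Config T} (hc : c ∈ RC T) :
    f c ∈ RC S := by
  have : Reach S (f T.initConfig) (f c) :=
    Relation.ReflTransGen.lift' f (fun _ _ ⟨l, h⟩ => hstep _ l _ h) _ _ hc
  rwa [h₀] at this

end Generic

section Policy

variable {I : Type} {P : I → Type} {A : Type} {S : ∀ i, CS (P i) A} {hh : ∀ i, P i}
  {CM : Set (I × A × I)} {i : I}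

/-- The shape of the transitions that (*) and (**) ask for. -/
def PolicyJustified (S : ∀ i, CS (P i) A) (hh : ∀ i, P i) (i : I)
    (x : (S i).St (hh i) × Act I A × (S i).St (hh i)) : Prop :=
  (∃ j a s, x.2.1 = Act.mk i j Dir.out a ∧ j ≠ i ∧
    (x.1, Act.mk s (hh i) Dir.inp a, x.2.2) ∈ (S i).delta (hh i)) ∨
  (∃ j a s, x.2.1 = Act.mk j i Dir.inp a ∧ j ≠ i ∧
    (x.1, Act.mk (hh i) s Dir.out a, x.2.2) ∈ (S i).delta (hh i))

lemma InIS.policyJustified {d : Set ((S i).St (hh i) × Act I A × (S i).St (hh i))}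
    (hd : InIS S hh CM i d) {x} (hx : x ∈ d) : PolicyJustified S hh i x := by
  have hsat : PolicySat S hh CM i {y ∈ d | PolicyJustified S hh i y} := by
    constructor
    · intro q r a q' hq
      obtain ⟨j, hj, hcm, hmem⟩ := hd.1.1 q r a q' hq
      exact ⟨j, hj, hcm, hmem, Or.inl ⟨j, a, r, rfl, hj, hq⟩⟩
    · intro q r a q' hq
      obtain ⟨j, hj, hcm, hmem⟩ := hd.1.2 q r a q' hq
      exact ⟨j, hj, hcm, hmem, Or.inr ⟨j, a, r, rfl, hj, hq⟩⟩
  rw [← hd.2 _ (fun y hy => hy.1) hsat] at hx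
  exact hx.2

lemma IsConnPolicy.wellFormed {Kd : ∀ i, Set ((S i).St (hh i) × Act I A × (S i).St (hh i))}
    (hK : IsConnPolicy S hh CM Kd) : (policyCS S hh Kd).WellFormed := by
  rintro i ⟨q, l, q'⟩ hx
  rcases (hK i).policyJustified hx with ⟨j, a, s, rfl, hj, -⟩ | ⟨j, a, s, rfl, hj, -⟩
  exacts [⟨rfl, hj.symm⟩, ⟨rfl, hj⟩]

end Policy

section Multicomposition

variable {I : Type} {P : I → Type} {A : Type} (S : ∀ i, CS (P i) A) (hh : ∀ i, P i)
  (Kd : ∀ i, Set ((S i).St (hh i) × Act I A × (S i).St (hh i)))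

lemma toGW_init (i : I) :
    toGW S hh i ((MC S hh Kd).init ⟨i, hh i⟩) = Sum.inl ((S i).init (hh i)) := by
  simp only [MC, toGW, MCSt, ↓reduceDIte]
  exact cast_cast _ _ _

lemma toLoc_init {i : I} {p : P i} (hp : p ≠ hh i) :
    toLoc S hh hp ((MC S hh Kd).init ⟨i, p⟩) = (S i).init p := by
  simp only [MC, toLoc, MCSt, hp, ↓reduceDIte]
  exact cast_cast _ _ _

lemma toGW_surjective (i : I) : Function.Surjective (toGW S hh i) :=
  fun g => ⟨cast (by simp [MCSt]) g, by simp [toGW]⟩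

lemma toLoc_surjective {i : I} {p : P i} (hp : p ≠ hh i) : Function.Surjective (toLoc S hh hp) :=
  fun g => ⟨cast (by simp [MCSt, hp]) g, by simp [toLoc]⟩

variable {S hh Kd}

lemma mem_MC_delta_gateway_iff {i : I} {x y : (MC S hh Kd).St ⟨i, hh i⟩}
    {l : Act ((j : I) × P j) A} :
    (x, l, y) ∈ (MC S hh Kd).delta ⟨i, hh i⟩ ↔
      (toGW S hh i x, l, toGW S hh i y) ∈ GWdelta S hh Kd i := by
  simp only [MC, toGW, MCSt, ↓reduceDIte]
  exact mem_cast_set (by simp) _ _ _ _ _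

lemma mem_MC_delta_local_iff {i : I} {p : P i} (hp : p ≠ hh i) {x y : (MC S hh Kd).St ⟨i, p⟩}
    {l : Act ((j : I) × P j) A} :
    (x, l, y) ∈ (MC S hh Kd).delta ⟨i, p⟩ ↔
      ∃ l₀, (toLoc S hh hp x, l₀, toLoc S hh hp y) ∈ (S i).delta p ∧ l = liftAct i l₀ := by
  simp only [MC, toLoc, MCSt, hp, ↓reduceDIte]
  refine (mem_cast_set (show (S i).St p = _ by simp [hp]) _ _ _ _ _).trans ?_
  constructor
  · rintro ⟨q, l₀, q', hm, he⟩
    simp only [Prod.mk.injEq] at he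
    obtain ⟨rfl, rfl, rfl⟩ := he
    exact ⟨l₀, hm, rfl⟩
  · rintro ⟨l₀, hm, rfl⟩
    exact ⟨_, l₀, _, hm, rfl⟩

lemma exists_mem_delta_of_mem_GWdelta_inl {i : I} {q : (S i).St (hh i)} {l y}
    (h : (Sum.inl q, l, y) ∈ GWdelta S hh Kd i) : ∃ l₀ q', (q, l₀, q') ∈ (S i).delta (hh i) := by
  rcases h with ⟨q₀, a, q₀', ⟨s, r, hod, -, hx | hx⟩ | ⟨s, r, hid, -, hx | hx⟩⟩ <;>
    simp only [Prod.mk.injEq, Sum.inl.injEq, reduceCtorEq, false_and] at hx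
  · exact ⟨_, _, hx.1 ▸ hod⟩
  · exact ⟨_, _, hx.1 ▸ hid⟩

lemma dir_eq_out_of_mem_GWdelta_inr {i : I} {t l y} (h : (Sum.inr t, l, y) ∈ GWdelta S hh Kd i) :
    l.dir = Dir.out := by
  rcases h with ⟨q₀, a, q₀', ⟨s, r, -, -, hx | hx⟩ | ⟨s, r, -, -, hx | hx⟩⟩ <;>
    simp only [Prod.mk.injEq, reduceCtorEq, false_and] at hx
  all_goals rw [hx.2.1]

lemma exists_mem_MC_delta_of_mem_GWdelta {i : I} {x : (MC S hh Kd).St ⟨i, hh i⟩} {l z}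
    (h : (toGW S hh i x, l, z) ∈ GWdelta S hh Kd i) :
    ∃ y, (x, l, y) ∈ (MC S hh Kd).delta ⟨i, hh i⟩ := by
  obtain ⟨y, rfl⟩ := toGW_surjective S hh i z
  exact ⟨y, mem_MC_delta_gateway_iff.2 h⟩

lemma exists_mem_MC_delta_of_mem_delta {i : I} {p : P i} (hp : p ≠ hh i)
    {x : (MC S hh Kd).St ⟨i, p⟩} {l₀ q'} (h : (toLoc S hh hp x, l₀, q') ∈ (S i).delta p) :
    ∃ y, (x, liftAct i l₀, y) ∈ (MC S hh Kd).delta ⟨i, p⟩ := by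
  obtain ⟨y, rfl⟩ := toLoc_surjective S hh hp q'
  exact ⟨y, (mem_MC_delta_local_iff hp).2 ⟨l₀, h, rfl⟩⟩

lemma stepL_MC_cases (hwf : ∀ i, (S i).WellFormed) {c c' : Config (MC S hh Kd)}
    {l : Act ((j : I) × P j) A} (h : StepL (MC S hh Kd) c l c') :
    (∃ j p, ∃ hp : p ≠ hh j, ∃ l₀ : Act (P j) A, l₀.subject = p ∧ l = liftAct j l₀ ∧
      (toLoc S hh hp (c.st ⟨j, p⟩), l₀, toLoc S hh hp (c'.st ⟨j, p⟩)) ∈ (S j).delta p) ∨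
    ∃ j, l.subject = ⟨j, hh j⟩ ∧
      (toGW S hh j (c.st ⟨j, hh j⟩), l, toGW S hh j (c'.st ⟨j, hh j⟩)) ∈ GWdelta S hh Kd j := by
  have hm := h.mem_delta
  generalize l.subject = x at hm
  obtain ⟨j, p⟩ := x
  by_cases hp : p = hh j
  · subst hp
    exact Or.inr ⟨j, rfl, mem_MC_delta_gateway_iff.1 hm⟩
  · obtain ⟨l₀, hl₀, rfl⟩ := (mem_MC_delta_local_iff hp).1 hm
    exact Or.inl ⟨j, p, hp, l₀, (hwf j p _ hl₀).1, rfl, hl₀⟩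

lemma sigma_mk_hh_ne {j : I} {s : P j} (hs : s ≠ hh j) (u : I) :
    (⟨u, hh u⟩ : (k : I) × P k) ≠ ⟨j, s⟩ := by
  rintro h
  obtain ⟨rfl, h⟩ := Sigma.mk.inj_iff.1 h
  exact hs (eq_of_heq h).symm

variable (S hh Kd)

/- In the fresh state `q^t` for an output `t` of `hh i` the message has been received from the
policy but not yet sent into `S i`; for an input `t` it has been received from `S i` but not yet
passed to the policy. -/

def gwSys {i : I} : GWState S hh i → (S i).St (hh i)
  | .inl q => q
  | .inr (q, l, q') => match l.dir with | .out => q | .inp => q'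

def gwPolicy {i : I} : GWState S hh i → (S i).St (hh i)
  | .inl q => q
  | .inr (q, l, q') => match l.dir with | .out => q' | .inp => q

open Classical in
noncomputable def sysProj (i : I) (p : P i) (x : MCSt S hh ⟨i, p⟩) : (S i).St p :=
  if hp : p = hh i then by subst hp; exact gwSys S hh (toGW S hh i x) else toLoc S hh hp x

noncomputable def sysView (c : Config (MC S hh Kd)) (i : I) : Config (S i) :=
  c.comap (Sigma.mk i) (sysProj S hh i)

noncomputable def policyView (c : Config (MC S hh Kd)) : Config (policyCS S hh Kd) :=
  c.comap (fun j => ⟨j, hh j⟩) (fun j x => gwPolicy S hh (toGW S hh j x))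

lemma sysView_st_self (c : Config (MC S hh Kd)) (i : I) :
    (sysView S hh Kd c i).st (hh i) = gwSys S hh (toGW S hh i (c.st ⟨i, hh i⟩)) := by
  simp [sysView, Config.comap, sysProj]

lemma sysView_st_of_ne (c : Config (MC S hh Kd)) {i : I} {p : P i} (hp : p ≠ hh i) :
    (sysView S hh Kd c i).st p = toLoc S hh hp (c.st ⟨i, p⟩) := by
  simp [sysView, Config.comap, sysProj, hp]

lemma sysView_init (i : I) : sysView S hh Kd (MC S hh Kd).initConfig i = (S i).initConfig := by
  refine Config.ext (funext fun p => ?_) rfl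
  by_cases hp : p = hh i
  · subst hp
    exact (sysView_st_self S hh Kd _ _).trans (congrArg (gwSys S hh) (toGW_init S hh Kd i))
  · exact (sysView_st_of_ne S hh Kd _ hp).trans (toLoc_init S hh Kd hp)

lemma policyView_init :
    policyView S hh Kd (MC S hh Kd).initConfig = (policyCS S hh Kd).initConfig :=
  Config.ext (funext fun i => by
    simp only [policyView, Config.comap, CS.initConfig, toGW_init]; rfl) rfl

variable {S hh Kd}

lemma reach_sysView_of_stepL_gateway (hKwf : (policyCS S hh Kd).WellFormed)
    {c c' : Config (MC S hh Kd)} {l : Act ((j : I) × P j) A} (h : StepL (MC S hh Kd) c l c')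
    {i : I} (hmem : (toGW S hh i (c.st ⟨i, hh i⟩), l, toGW S hh i (c'.st ⟨i, hh i⟩)) ∈
      GWdelta S hh Kd i) :
    Reach (S i) (sysView S hh Kd c i) (sysView S hh Kd c' i) := by
  rcases hmem with ⟨q, a, q', ⟨s, r, hod, hkd, hx | hx⟩ | ⟨s, r, hid, hkd, hx | hx⟩⟩ <;>
    simp only [Prod.mk.injEq] at hx <;> obtain ⟨h₁, rfl, h₂⟩ := hx
  · have hr : r ≠ i := (hKwf i _ hkd).2
    have : sysView S hh Kd c' i = sysView S hh Kd c i :=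
      h.comap_eq_of_subject_eq sigma_mk_injective rfl
        (by rw [← sysView, ← sysView, sysView_st_self, sysView_st_self, h₁, h₂]; rfl)
        (by simp [hr.symm])
    exact this ▸ .refl
  · refine .single ⟨Act.mk (hh i) s Dir.out a, h.comap sigma_mk_injective ?_⟩
    show ((sysView S hh Kd c i).st (hh i), _, (sysView S hh Kd c' i).st (hh i)) ∈ _
    rwa [sysView_st_self, sysView_st_self, h₁, h₂]
  · refine .single ⟨Act.mk s (hh i) Dir.inp a, h.comap sigma_mk_injective ?_⟩
    show ((sysView S hh Kd c i).st (hh i), _, (sysView S hh Kd c' i).st (hh i)) ∈ _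
    rwa [sysView_st_self, sysView_st_self, h₁, h₂]
  · have hr : i ≠ r := (hKwf i _ hkd).2
    have : sysView S hh Kd c' i = sysView S hh Kd c i :=
      h.comap_eq_of_subject_eq sigma_mk_injective rfl
        (by rw [← sysView, ← sysView, sysView_st_self, sysView_st_self, h₁, h₂]; rfl)
        (by simp [hr])
    exact this ▸ .refl

lemma reach_sysView_of_stepL (hwf : ∀ i, (S i).WellFormed) (hKwf : (policyCS S hh Kd).WellFormed)
    {c c' : Config (MC S hh Kd)} {l : Act ((j : I) × P j) A} (h : StepL (MC S hh Kd) c l c')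
    (i : I) : Reach (S i) (sysView S hh Kd c i) (sysView S hh Kd c' i) := by
  rcases stepL_MC_cases hwf h with ⟨j, p, hp, l₀, hsub, rfl, hmem⟩ | ⟨j, hsub, hmem⟩
  · by_cases hji : j = i
    · subst hji hsub
      refine .single ⟨l₀, h.comap sigma_mk_injective ?_⟩
      show ((sysView S hh Kd c j).st l₀.subject, l₀, (sysView S hh Kd c' j).st l₀.subject) ∈ _
      rwa [sysView_st_of_ne S hh Kd c hp, sysView_st_of_ne S hh Kd c' hp]
    · have : sysView S hh Kd c' i = sysView S hh Kd c i :=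
        h.comap_eq_of_forall_ne fun u hu =>
          hji (congrArg Sigma.fst (hu.trans (Act.subject_map _ l₀))).symm
      exact this ▸ .refl
  · by_cases hji : j = i
    · subst hji
      exact reach_sysView_of_stepL_gateway hKwf h hmem
    · have : sysView S hh Kd c' i = sysView S hh Kd c i :=
        h.comap_eq_of_forall_ne fun u hu => hji (congrArg Sigma.fst (hu.trans hsub)).symm
      exact this ▸ .refl

lemma reach_policyView_of_stepL (hwf : ∀ i, (S i).WellFormed)
    {c c' : Config (MC S hh Kd)} {l : Act ((j : I) × P j) A} (h : StepL (MC S hh Kd) c l c') :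
    Reach (policyCS S hh Kd) (policyView S hh Kd c) (policyView S hh Kd c') := by
  have hemb : Function.Injective fun j => (⟨j, hh j⟩ : (k : I) × P k) :=
    fun _ _ e => congrArg Sigma.fst e
  rcases stepL_MC_cases hwf h with ⟨j, p, hp, l₀, hsub, rfl, -⟩ | ⟨j, hsub, hmem⟩
  · have : policyView S hh Kd c' = policyView S hh Kd c :=
      h.comap_eq_of_forall_ne fun u hu =>
        sigma_mk_hh_ne hp u (hu.trans ((Act.subject_map _ l₀).trans (by rw [hsub])))
    exact this ▸ .refl
  rcases hmem with ⟨q, a, q', ⟨s, r, hod, hkd, hx | hx⟩ | ⟨s, r, hid, hkd, hx | hx⟩⟩ <;>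
    simp only [Prod.mk.injEq] at hx <;> obtain ⟨h₁, rfl, h₂⟩ := hx
  · refine .single ⟨Act.mk r j Dir.inp a, h.comap hemb ?_⟩
    show (gwPolicy S hh (toGW S hh j (c.st ⟨j, hh j⟩)), _,
      gwPolicy S hh (toGW S hh j (c'.st ⟨j, hh j⟩))) ∈ Kd j
    rwa [h₁, h₂]
  · have hs : s ≠ hh j := (hwf j _ _ hod).2.symm
    have : policyView S hh Kd c' = policyView S hh Kd c :=
      h.comap_eq_of_subject_eq hemb hsub
        (by show gwPolicy S hh _ = gwPolicy S hh _; rw [h₁, h₂]; rfl)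
        fun u v e => sigma_mk_hh_ne hs v (congrArg Prod.snd e)
    exact this ▸ .refl
  · have hs : s ≠ hh j := (hwf j _ _ hid).2
    have : policyView S hh Kd c' = policyView S hh Kd c :=
      h.comap_eq_of_subject_eq hemb hsub
        (by show gwPolicy S hh _ = gwPolicy S hh _; rw [h₁, h₂]; rfl)
        fun u v e => sigma_mk_hh_ne hs u (congrArg Prod.fst e)
    exact this ▸ .refl
  · refine .single ⟨Act.mk j r Dir.out a, h.comap hemb ?_⟩
    show (gwPolicy S hh (toGW S hh j (c.st ⟨j, hh j⟩)), _,
      gwPolicy S hh (toGW S hh j (c'.st ⟨j, hh j⟩))) ∈ Kd j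
    rwa [h₁, h₂]

lemma sysView_mem_RC (hwf : ∀ i, (S i).WellFormed) (hKwf : (policyCS S hh Kd).WellFormed)
    {c : Config (MC S hh Kd)} (hc : c ∈ RC (MC S hh Kd)) (i : I) :
    sysView S hh Kd c i ∈ RC (S i) :=
  mem_RC_map (sysView S hh Kd · i) (sysView_init S hh Kd i)
    (fun _ _ _ h => reach_sysView_of_stepL hwf hKwf h i) hc

lemma policyView_mem_RC (hwf : ∀ i, (S i).WellFormed) {c : Config (MC S hh Kd)}
    (hc : c ∈ RC (MC S hh Kd)) : policyView S hh Kd c ∈ RC (policyCS S hh Kd) :=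
  mem_RC_map (policyView S hh Kd) (policyView_init S hh Kd)
    (fun _ _ _ h => reach_policyView_of_stepL hwf h) hc

lemma not_receivingSt_of_toGW_eq_inr {i : I} {x : (MC S hh Kd).St ⟨i, hh i⟩} {t}
    (hx : toGW S hh i x = Sum.inr t) : ¬ ReceivingSt ((MC S hh Kd).delta ⟨i, hh i⟩) x := by
  rintro ⟨⟨l, y, hl⟩, hinp⟩
  have hout := dir_eq_out_of_mem_GWdelta_inr (hx ▸ mem_MC_delta_gateway_iff.1 hl)
  rw [hinp _ _ hl] at hout
  cases hout

lemma urAt_sysView_of_local {c : Config (MC S hh Kd)} {i : I} {p : P i} (hp : p ≠ hh i)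
    (hur : URAt (MC S hh Kd) c ⟨i, p⟩) : URAt (S i) (sysView S hh Kd c i) p := by
  refine hur.comap ⟨?_, ?_⟩ ?_ <;> rw [← sysView, sysView_st_of_ne S hh Kd c hp]
  · obtain ⟨l, y, hl⟩ := hur.1.1
    obtain ⟨l₀, hl₀, -⟩ := (mem_MC_delta_local_iff hp).1 hl
    exact ⟨l₀, _, hl₀⟩
  · intro l₀ q' h
    obtain ⟨y, hy⟩ := exists_mem_MC_delta_of_mem_delta hp h
    exact hur.1.2 _ _ hy
  · exact fun s a q' h => exists_mem_MC_delta_of_mem_delta hp h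

lemma urAt_sysView_of_gateway {CM : Set (I × A × I)} (hK : IsConnPolicy S hh CM Kd)
    {c : Config (MC S hh Kd)} {i : I} {q : (S i).St (hh i)}
    (hq : toGW S hh i (c.st ⟨i, hh i⟩) = Sum.inl q)
    (hout : ¬ ∃ l q', (q, l, q') ∈ (S i).delta (hh i) ∧ l.dir = Dir.out)
    (hur : URAt (MC S hh Kd) c ⟨i, hh i⟩) : URAt (S i) (sysView S hh Kd c i) (hh i) := by
  have hst : (sysView S hh Kd c i).st (hh i) = q := by rw [sysView_st_self, hq]; rfl
  refine hur.comap ⟨?_, ?_⟩ ?_ <;> rw [← sysView, hst]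
  · obtain ⟨l, y, hl⟩ := hur.1.1
    rw [mem_MC_delta_gateway_iff, hq] at hl
    exact exists_mem_delta_of_mem_GWdelta_inl hl
  · intro l q' h
    cases hd : l.dir
    exacts [absurd ⟨l, q', h, hd⟩ hout, rfl]
  · intro s a q' h
    obtain ⟨j, -, -, hkd⟩ := (hK i).1.1 q s a q' h
    exact exists_mem_MC_delta_of_mem_GWdelta (by
      rw [hq]; exact ⟨q, a, q', Or.inr ⟨s, j, h, hkd, Or.inl rfl⟩⟩)

lemma urAt_policyView_of_gateway (hwf : ∀ i, (S i).WellFormed) {CM : Set (I × A × I)}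
    (hK : IsConnPolicy S hh CM Kd) {c : Config (MC S hh Kd)} {i : I} {q : (S i).St (hh i)}
    (hq : toGW S hh i (c.st ⟨i, hh i⟩) = Sum.inl q) (hmix : ¬ MixedSt ((S i).delta (hh i)) q)
    (hout : ∃ l q', (q, l, q') ∈ (S i).delta (hh i) ∧ l.dir = Dir.out)
    (hur : URAt (MC S hh Kd) c ⟨i, hh i⟩) : URAt (policyCS S hh Kd) (policyView S hh Kd c) i := by
  have hst : (policyView S hh Kd c).st i = q := by
    show gwPolicy S hh (toGW S hh i (c.st ⟨i, hh i⟩)) = q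
    rw [hq]; rfl
  refine URAt.comap (emb := fun j => (⟨j, hh j⟩ : (k : I) × P k)) (r := i) hur ⟨?_, ?_⟩ ?_ <;>
    rw [← policyView, hst]
  · obtain ⟨⟨s, r, d, a⟩, q', hl, hd⟩ := hout
    obtain rfl : d = Dir.out := hd
    obtain rfl : s = hh i := (hwf i _ _ hl).1
    obtain ⟨j, -, -, hkd⟩ := (hK i).1.2 q r a q' hl
    exact ⟨_, _, hkd⟩
  · intro l q' h
    rcases (hK i).policyJustified h with ⟨j, a, s, rfl, -, hid⟩ | ⟨j, a, s, rfl, -, -⟩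
    exacts [absurd ⟨hout, _, _, hid, rfl⟩ hmix, rfl]
  · intro s a q' h
    rcases (hK i).policyJustified h with ⟨j, a', s₀, he, -, -⟩ | ⟨j, a', s₀, he, -, hod⟩
    · cases he
    · obtain ⟨rfl, -, -, rfl⟩ := Act.mk.inj he
      exact exists_mem_MC_delta_of_mem_GWdelta (by
        rw [hq]; exact ⟨q, a, q', Or.inl ⟨s₀, s, hod, h, Or.inl rfl⟩⟩)

end Multicomposition

end CFSM

open CFSM in
theorem receptionErrorFree_preserved_by_multicomposition_general
    {I : Type} {P : I → Type} {A : Type}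
    (S : ∀ i, CS (P i) A)
    (hwf : ∀ i, (S i).WellFormed)
    (hh : ∀ i, P i)
    (hnomix : ∀ i, NoMixed ((S i).delta (hh i)))
    (CM : Set (I × A × I))
    (Kd : ∀ i, Set ((S i).St (hh i) × Act I A × (S i).St (hh i)))
    (hK : IsConnPolicy S hh CM Kd)
    (hS : ∀ i, ReceptionErrorFree (S i))
    (hKfree : ReceptionErrorFree (policyCS S hh Kd)) :
    ReceptionErrorFree (MC S hh Kd) := by
  rintro c hc ⟨⟨i, p⟩, hur⟩
  have hσ := sysView_mem_RC hwf hK.wellFormed hc i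
  by_cases hp : p = hh i
  · subst hp
    rcases hq : toGW S hh i (c.st ⟨i, hh i⟩) with q | t
    · by_cases hout : ∃ l q', (q, l, q') ∈ (S i).delta (hh i) ∧ l.dir = Dir.out
      · exact hKfree _ (policyView_mem_RC hwf hc)
          ⟨i, urAt_policyView_of_gateway hwf hK hq (hnomix i q) hout hur⟩
      · exact hS i _ hσ ⟨hh i, urAt_sysView_of_gateway hK hq hout hur⟩
    · exact not_receivingSt_of_toGW_eq_inr hq hur.1
  · exact hS i _ hσ ⟨p, urAt_sysView_of_local hp hur⟩

open CFSM in
/-- PaI multicomposition preserves reception-error-freeness, provided the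
interfaces have no mixed states and the connection policy is reception-error free. -/
theorem receptionErrorFree_preserved_by_multicomposition
    {I : Type} [Finite I] {P : I → Type} [∀ i, Finite (P i)] {A : Type} [Finite A]
    (S : ∀ i, CS (P i) A)
    (hfin : ∀ i p, Finite ((S i).St p))
    (hwf : ∀ i, (S i).WellFormed)
    (hh : ∀ i, P i)
    (hnomix : ∀ i, NoMixed ((S i).delta (hh i)))
    (CM : Set (I × A × I)) (hCM : IsConnModel S hh CM)
    (Kd : ∀ i, Set ((S i).St (hh i) × Act I A × (S i).St (hh i)))
    (hK : IsConnPolicy S hh CM Kd)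
    (hS : ∀ i, ReceptionErrorFree (S i))
    (hKfree : ReceptionErrorFree (policyCS S hh Kd)) :
    ReceptionErrorFree (MC S hh Kd) :=
  receptionErrorFree_preserved_by_multicomposition_general S hwf hh hnomix CM Kd hK hS hKfree
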